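/- Let B(z) = C · ∏_{i=1}^n (z − a_i)/(1 − conj(a_i)·z) be a finite Blaschke product with n ≥ 2 such that |B'(z)| > 1 for all z ∈ ℂ with |z| = 1. Then B has a fixed point z₀ with |z₀| < 1, this fixed point is unique among points of the open unit disk, and it is attracting: |B'(z₀)| < 1. -/

import Mathlib

/-!
Schwarz–Pick: a holomorphic self-map of the disk either preserves the pseudo-hyperbolic distance
`ρ(z, w) = |z - w| / |1 - w̄ z|` (it is a disk automorphism) or contracts every pair strictly and
satisfies `|f'(y)| (1 - |y|²) < 1 - |f y|²`. A Blaschke product with two zeros `a, b` is not an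
automorphism: with `φ_a = blaschkeFactor a`, `|B z| ≤ |φ_a z| |φ_b z| < |φ_a z| = ρ(z, a)`.
Expansion on the circle gives `1 - |B z|² ≥ (1 - |z|²) |B z|² ∑ (1 - |aᵢ|²) / |1 - āᵢ z|²`
`> 1 - |z|²` near the circle, so `B` maps some disk `|z| ≤ r < 1` into itself. A minimiser of
`z ↦ ρ(B z, z)` on that disk is a fixed point, and strict contraction makes it unique and
attracting.
-/

open Complex Metric Set Finset
open scoped ComplexConjugate

noncomputable def blaschkeFactor (a z : ℂ) : ℂ := (z - a) / (1 - conj a * z)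

noncomputable def pseudoHypDist (z w : ℂ) : ℝ := ‖blaschkeFactor w z‖

section Moebius

variable {a z w : ℂ}

theorem sq_norm_one_sub_conj_mul_sub_sq_norm_sub (a z : ℂ) :
    ‖1 - conj a * z‖ ^ 2 - ‖z - a‖ ^ 2 = (1 - ‖a‖ ^ 2) * (1 - ‖z‖ ^ 2) := by
  simp only [Complex.sq_norm, normSq_apply, sub_re, sub_im, mul_re, mul_im, conj_re, conj_im,
    one_re, one_im]
  ring

theorem one_sub_conj_mul_ne_zero (ha : ‖a‖ < 1) (hz : ‖z‖ ≤ 1) : 1 - conj a * z ≠ 0 := by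
  refine sub_ne_zero.2 (ne_of_apply_ne norm (ne_of_gt ?_))
  rw [norm_mul, norm_conj, norm_one]
  nlinarith [norm_nonneg a, norm_nonneg z]

theorem one_sub_sq_norm_blaschkeFactor (ha : ‖a‖ < 1) (hz : ‖z‖ ≤ 1) :
    1 - ‖blaschkeFactor a z‖ ^ 2 = (1 - ‖a‖ ^ 2) * (1 - ‖z‖ ^ 2) / ‖1 - conj a * z‖ ^ 2 := by
  have hd : ‖1 - conj a * z‖ ^ 2 ≠ 0 :=
    pow_ne_zero 2 (norm_ne_zero_iff.2 (one_sub_conj_mul_ne_zero ha hz))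
  rw [blaschkeFactor, norm_div, div_pow, one_sub_div hd,
    sq_norm_one_sub_conj_mul_sub_sq_norm_sub]

theorem norm_blaschkeFactor_lt_one (ha : ‖a‖ < 1) (hz : ‖z‖ < 1) : ‖blaschkeFactor a z‖ < 1 := by
  have hpos : 0 < (1 - ‖a‖ ^ 2) * (1 - ‖z‖ ^ 2) / ‖1 - conj a * z‖ ^ 2 := by
    have := norm_pos_iff.2 (one_sub_conj_mul_ne_zero ha hz.le)
    apply div_pos (mul_pos ?_ ?_) (by positivity) <;> nlinarith [norm_nonneg a, norm_nonneg z]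
  rw [← one_sub_sq_norm_blaschkeFactor ha hz.le] at hpos
  nlinarith [norm_nonneg (blaschkeFactor a z)]

theorem norm_blaschkeFactor_le_one (ha : ‖a‖ < 1) (hz : ‖z‖ ≤ 1) : ‖blaschkeFactor a z‖ ≤ 1 := by
  have hnonneg : 0 ≤ (1 - ‖a‖ ^ 2) * (1 - ‖z‖ ^ 2) / ‖1 - conj a * z‖ ^ 2 := by
    apply div_nonneg (mul_nonneg ?_ ?_) (by positivity) <;> nlinarith [norm_nonneg a, norm_nonneg z]
  rw [← one_sub_sq_norm_blaschkeFactor ha hz] at hnonneg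
  nlinarith [norm_nonneg (blaschkeFactor a z)]

theorem norm_blaschkeFactor_of_norm_eq_one (ha : ‖a‖ < 1) (hz : ‖z‖ = 1) :
    ‖blaschkeFactor a z‖ = 1 := by
  have h := one_sub_sq_norm_blaschkeFactor ha hz.le
  rw [hz, one_pow, sub_self, mul_zero, zero_div, sub_eq_zero] at h
  nlinarith [norm_nonneg (blaschkeFactor a z)]

theorem mapsTo_blaschkeFactor (ha : ‖a‖ < 1) :
    MapsTo (blaschkeFactor a) (ball 0 1) (ball 0 1) := fun z hz ↦ by
  rw [mem_ball_zero_iff] at hz ⊢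
  exact norm_blaschkeFactor_lt_one ha hz

@[simp]
theorem blaschkeFactor_self (a : ℂ) : blaschkeFactor a a = 0 := by simp [blaschkeFactor]

@[simp]
theorem blaschkeFactor_zero_left (z : ℂ) : blaschkeFactor 0 z = z := by simp [blaschkeFactor]

@[simp]
theorem blaschkeFactor_neg_zero (a : ℂ) : blaschkeFactor (-a) 0 = a := by simp [blaschkeFactor]

theorem blaschkeFactor_neg_blaschkeFactor (ha : ‖a‖ < 1) (hz : ‖z‖ ≤ 1) :
    blaschkeFactor (-a) (blaschkeFactor a z) = z := by
  have hd := one_sub_conj_mul_ne_zero ha hz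
  set w := blaschkeFactor a z with hw
  have hw' : w * (1 - conj a * z) = z - a := div_mul_cancel₀ _ hd
  have hden : 1 + conj a * w ≠ 0 := by
    refine left_ne_zero_of_mul (b := 1 - conj a * z) ?_
    rw [show (1 + conj a * w) * (1 - conj a * z) = 1 - conj a * a by
      linear_combination conj a * hw']
    exact one_sub_conj_mul_ne_zero ha ha.le
  rw [blaschkeFactor, map_neg, neg_mul, sub_neg_eq_add, sub_neg_eq_add, div_eq_iff hden]
  linear_combination hw'

theorem blaschkeFactor_blaschkeFactor_neg (ha : ‖a‖ < 1) (hz : ‖z‖ ≤ 1) :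
    blaschkeFactor a (blaschkeFactor (-a) z) = z := by
  simpa using blaschkeFactor_neg_blaschkeFactor (a := -a) (by simpa using ha) hz

theorem hasDerivAt_blaschkeFactor (hz : 1 - conj a * z ≠ 0) :
    HasDerivAt (blaschkeFactor a) (((1 - ‖a‖ ^ 2 : ℝ) : ℂ) / (1 - conj a * z) ^ 2) z := by
  have h : HasDerivAt (fun x ↦ (x - a) / (1 - conj a * x))
      ((1 * (1 - conj a * z) - (z - a) * -(conj a * 1)) / (1 - conj a * z) ^ 2) z :=
    ((hasDerivAt_id' z).sub_const a).fun_div (((hasDerivAt_id' z).const_mul _).const_sub 1) hz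
  refine h.congr_deriv ?_
  push_cast
  rw [← conj_mul']
  ring

theorem pseudoHypDist_blaschkeFactor (ha : ‖a‖ < 1) (hz : ‖z‖ < 1) (hw : ‖w‖ < 1) :
    pseudoHypDist (blaschkeFactor a z) (blaschkeFactor a w) = pseudoHypDist z w := by
  set u := blaschkeFactor a z
  set v := blaschkeFactor a w
  have hu : u * (1 - conj a * z) = z - a := div_mul_cancel₀ _ (one_sub_conj_mul_ne_zero ha hz.le)
  have hv : v * (1 - conj a * w) = w - a := div_mul_cancel₀ _ (one_sub_conj_mul_ne_zero ha hw.le)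
  have hv' : conj v * (1 - a * conj w) = conj w - conj a := by simpa using congrArg conj hv
  have hnum : (u - v) * (1 - conj a * z) * (1 - conj a * w) = (z - w) * (1 - conj a * a) := by
    linear_combination (1 - conj a * w) * hu - (1 - conj a * z) * hv
  have hden : (1 - conj v * u) * (1 - a * conj w) * (1 - conj a * z) =
      (1 - conj w * z) * (1 - conj a * a) := by
    linear_combination -(z - a) * hv' - conj v * (1 - a * conj w) * hu
  have hconj : ‖1 - a * conj w‖ = ‖1 - conj a * w‖ := by
    rw [← norm_conj]; simp
  have hP := norm_pos_iff.2 (one_sub_conj_mul_ne_zero ha hz.le)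
  have hQ := norm_pos_iff.2 (one_sub_conj_mul_ne_zero ha hw.le)
  have hK := norm_pos_iff.2 (one_sub_conj_mul_ne_zero ha ha.le)
  have hM := norm_pos_iff.2 (one_sub_conj_mul_ne_zero hw hz.le)
  replace hnum := congrArg norm hnum
  replace hden := congrArg norm hden
  simp only [norm_mul, hconj] at hnum hden
  have hD : 0 < ‖1 - conj v * u‖ := by
    by_contra h
    rw [le_antisymm (not_lt.1 h) (norm_nonneg _)] at hden
    nlinarith [mul_pos hM hK]
  simp only [pseudoHypDist, blaschkeFactor, norm_div]
  rw [div_eq_div_iff hD.ne' hM.ne']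
  refine mul_right_cancel₀ (mul_pos (mul_pos hP hQ) hK).ne' ?_
  linear_combination ‖1 - conj w * z‖ * ‖1 - conj a * a‖ * hnum - ‖z - w‖ * ‖1 - conj a * a‖ * hden

theorem pseudoHypDist_mul_left {c : ℂ} (hc : ‖c‖ = 1) (z w : ℂ) :
    pseudoHypDist (c * z) (c * w) = pseudoHypDist z w := by
  have hcc : conj c * c = 1 := by rw [conj_mul', hc]; norm_num
  simp only [pseudoHypDist, blaschkeFactor, map_mul]
  rw [show c * z - c * w = c * (z - w) by ring,
    show 1 - conj c * conj w * (c * z) = 1 - conj w * z by linear_combination (-(conj w * z)) * hcc,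
    mul_div_assoc, norm_mul, hc, one_mul]

theorem differentiableAt_blaschkeFactor (ha : ‖a‖ < 1) (hz : ‖z‖ ≤ 1) :
    DifferentiableAt ℂ (blaschkeFactor a) z :=
  (hasDerivAt_blaschkeFactor (one_sub_conj_mul_ne_zero ha hz)).differentiableAt

theorem hasDerivAt_blaschkeFactor_self (ha : ‖a‖ < 1) :
    HasDerivAt (blaschkeFactor a) ((1 - ‖a‖ ^ 2 : ℝ) : ℂ)⁻¹ a := by
  have h : ((1 - ‖a‖ ^ 2 : ℝ) : ℂ) ≠ 0 := by
    rw [ofReal_ne_zero]; nlinarith [norm_nonneg a]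
  refine (hasDerivAt_blaschkeFactor (one_sub_conj_mul_ne_zero ha ha.le)).congr_deriv ?_
  rw [conj_mul', ← ofReal_pow, ← ofReal_one, ← ofReal_sub]
  field_simp

theorem hasDerivAt_blaschkeFactor_neg_zero (a : ℂ) :
    HasDerivAt (blaschkeFactor (-a)) ((1 - ‖a‖ ^ 2 : ℝ) : ℂ) 0 := by
  simpa using hasDerivAt_blaschkeFactor (a := -a) (z := 0) (by simp)

end Moebius

section SchwarzPick

variable {f : ℂ → ℂ} {x y : ℂ}

noncomputable def recenter (f : ℂ → ℂ) (y : ℂ) (ζ : ℂ) : ℂ :=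
  blaschkeFactor (f y) (f (blaschkeFactor (-y) ζ))

@[simp]
theorem recenter_zero : recenter f y 0 = 0 := by simp [recenter]

theorem recenter_blaschkeFactor (hx : ‖x‖ < 1) (hy : ‖y‖ < 1) :
    recenter f y (blaschkeFactor y x) = blaschkeFactor (f y) (f x) := by
  rw [recenter, blaschkeFactor_neg_blaschkeFactor hy hx.le]

theorem differentiableOn_recenter (hf : DifferentiableOn ℂ f (ball 0 1))
    (hmaps : MapsTo f (ball 0 1) (ball 0 1)) (hy : ‖y‖ < 1) :
    DifferentiableOn ℂ (recenter f y) (ball 0 1) := by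
  have hfy : ‖f y‖ < 1 := mem_ball_zero_iff.1 (hmaps (mem_ball_zero_iff.2 hy))
  have hy' : ‖-y‖ < 1 := by rwa [norm_neg]
  intro ζ hζ
  have hζ' := mapsTo_blaschkeFactor hy' hζ
  have hfζ := mem_ball_zero_iff.1 (hmaps hζ')
  refine ((differentiableAt_blaschkeFactor hfy hfζ.le).comp ζ ?_).differentiableWithinAt
  exact (hf.differentiableAt (isOpen_ball.mem_nhds hζ')).comp ζ
    (differentiableAt_blaschkeFactor hy' (mem_ball_zero_iff.1 hζ).le)

theorem mapsTo_recenter (hmaps : MapsTo f (ball 0 1) (ball 0 1)) (hy : ‖y‖ < 1) :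
    MapsTo (recenter f y) (ball 0 1) (closedBall (recenter f y 0) 1) := by
  rw [recenter_zero]
  refine MapsTo.mono_right ?_ ball_subset_closedBall
  exact (mapsTo_blaschkeFactor (mem_ball_zero_iff.1 (hmaps (mem_ball_zero_iff.2 hy)))).comp
    (hmaps.comp (mapsTo_blaschkeFactor (by rwa [norm_neg])))

theorem norm_dslope_recenter_le_one (hf : DifferentiableOn ℂ f (ball 0 1))
    (hmaps : MapsTo f (ball 0 1) (ball 0 1)) (hy : ‖y‖ < 1) {ζ : ℂ} (hζ : ‖ζ‖ < 1) :
    ‖dslope (recenter f y) 0 ζ‖ ≤ 1 := by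
  simpa using Complex.norm_dslope_le_div_of_mapsTo_ball (differentiableOn_recenter hf hmaps hy)
    (mapsTo_recenter hmaps hy) (mem_ball_zero_iff.2 hζ)

theorem pseudoHypDist_eq_of_norm_dslope_recenter_eq_one (hf : DifferentiableOn ℂ f (ball 0 1))
    (hmaps : MapsTo f (ball 0 1) (ball 0 1)) (hy : ‖y‖ < 1) {ζ : ℂ} (hζ : ‖ζ‖ < 1)
    (h : ‖dslope (recenter f y) 0 ζ‖ = 1) {z w : ℂ} (hz : ‖z‖ < 1) (hw : ‖w‖ < 1) :
    pseudoHypDist (f z) (f w) = pseudoHypDist z w := by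
  -- By the equality case of the Schwarz lemma `recenter f y` is a rotation,
  -- so `f` is a composition of isometries of `pseudoHypDist`.
  obtain ⟨c, hc, hrot⟩ := Complex.affine_of_mapsTo_ball_of_exists_norm_dslope_eq_div'
    (differentiableOn_recenter hf hmaps hy) (mapsTo_recenter hmaps hy)
    ⟨ζ, mem_ball_zero_iff.2 hζ, by rw [h, div_one]⟩
  rw [div_one] at hc
  have hfy : ‖f y‖ < 1 := mem_ball_zero_iff.1 (hmaps (mem_ball_zero_iff.2 hy))
  have hrep : ∀ x, ‖x‖ < 1 → f x = blaschkeFactor (-f y) (c * blaschkeFactor y x) := by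
    intro x hx
    have hfx : ‖f x‖ < 1 := mem_ball_zero_iff.1 (hmaps (mem_ball_zero_iff.2 hx))
    have hx' := hrot (mapsTo_blaschkeFactor hy (mem_ball_zero_iff.2 hx))
    rw [recenter_blaschkeFactor hx hy, recenter_zero] at hx'
    simp only [zero_add, sub_zero, smul_eq_mul, mul_comm] at hx'
    rw [← hx', blaschkeFactor_neg_blaschkeFactor hfy hfx.le]
  have hrot_lt : ∀ x, ‖x‖ < 1 → ‖c * blaschkeFactor y x‖ < 1 := fun x hx ↦ by
    rw [norm_mul, hc, one_mul]
    exact norm_blaschkeFactor_lt_one hy hx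
  rw [hrep z hz, hrep w hw,
    pseudoHypDist_blaschkeFactor (by rwa [norm_neg]) (hrot_lt z hz) (hrot_lt w hw),
    pseudoHypDist_mul_left hc, pseudoHypDist_blaschkeFactor hy hz hw]

theorem norm_dslope_recenter_lt_one (hf : DifferentiableOn ℂ f (ball 0 1))
    (hmaps : MapsTo f (ball 0 1) (ball 0 1))
    (hcontr : ∃ z₀ w₀, ‖z₀‖ < 1 ∧ ‖w₀‖ < 1 ∧ pseudoHypDist (f z₀) (f w₀) < pseudoHypDist z₀ w₀)
    (hy : ‖y‖ < 1) {ζ : ℂ} (hζ : ‖ζ‖ < 1) :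
    ‖dslope (recenter f y) 0 ζ‖ < 1 := by
  refine (norm_dslope_recenter_le_one hf hmaps hy hζ).lt_of_ne fun h ↦ ?_
  obtain ⟨z₀, w₀, hz₀, hw₀, hlt⟩ := hcontr
  exact hlt.ne (pseudoHypDist_eq_of_norm_dslope_recenter_eq_one hf hmaps hy hζ h hz₀ hw₀)

theorem pseudoHypDist_lt_of_ne (hf : DifferentiableOn ℂ f (ball 0 1))
    (hmaps : MapsTo f (ball 0 1) (ball 0 1))
    (hcontr : ∃ z₀ w₀, ‖z₀‖ < 1 ∧ ‖w₀‖ < 1 ∧ pseudoHypDist (f z₀) (f w₀) < pseudoHypDist z₀ w₀)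
    (hx : ‖x‖ < 1) (hy : ‖y‖ < 1) (hxy : x ≠ y) :
    pseudoHypDist (f x) (f y) < pseudoHypDist x y := by
  have hζ0 : blaschkeFactor y x ≠ 0 := fun h ↦ hxy <| by
    rw [← blaschkeFactor_neg_blaschkeFactor hy hx.le, h, blaschkeFactor_neg_zero]
  have h := norm_dslope_recenter_lt_one hf hmaps hcontr hy (norm_blaschkeFactor_lt_one hy hx)
  rwa [dslope_of_ne _ hζ0, slope_def_field, recenter_zero, sub_zero, sub_zero,
    recenter_blaschkeFactor hx hy, norm_div, div_lt_one (norm_pos_iff.2 hζ0)] at h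

theorem norm_deriv_mul_lt (hf : DifferentiableOn ℂ f (ball 0 1))
    (hmaps : MapsTo f (ball 0 1) (ball 0 1))
    (hcontr : ∃ z₀ w₀, ‖z₀‖ < 1 ∧ ‖w₀‖ < 1 ∧ pseudoHypDist (f z₀) (f w₀) < pseudoHypDist z₀ w₀)
    (hy : ‖y‖ < 1) :
    ‖deriv f y‖ * (1 - ‖y‖ ^ 2) < 1 - ‖f y‖ ^ 2 := by
  have hfy : ‖f y‖ < 1 := mem_ball_zero_iff.1 (hmaps (mem_ball_zero_iff.2 hy))
  have hderiv : HasDerivAt (recenter f y)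
      (((1 - ‖f y‖ ^ 2 : ℝ) : ℂ)⁻¹ * (deriv f y * ((1 - ‖y‖ ^ 2 : ℝ) : ℂ))) 0 := by
    have hf' : HasDerivAt f (deriv f y) (blaschkeFactor (-y) 0) := by
      rw [blaschkeFactor_neg_zero]
      exact (hf.differentiableAt (isOpen_ball.mem_nhds (mem_ball_zero_iff.2 hy))).hasDerivAt
    have hφ : HasDerivAt (blaschkeFactor (f y)) ((1 - ‖f y‖ ^ 2 : ℝ) : ℂ)⁻¹
        (f (blaschkeFactor (-y) 0)) := by
      rw [blaschkeFactor_neg_zero]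
      exact hasDerivAt_blaschkeFactor_self hfy
    exact hφ.comp 0 (hf'.comp 0 (hasDerivAt_blaschkeFactor_neg_zero y))
  have h := norm_dslope_recenter_lt_one hf hmaps hcontr hy (ζ := 0) (by norm_num)
  have hfy' : 0 < 1 - ‖f y‖ ^ 2 := by nlinarith [norm_nonneg (f y)]
  have hy' : 0 ≤ 1 - ‖y‖ ^ 2 := by nlinarith [norm_nonneg y]
  rwa [dslope_same, hderiv.deriv, norm_mul, norm_inv, norm_mul, Complex.norm_of_nonneg hfy'.le,
    Complex.norm_of_nonneg hy', inv_mul_lt_iff₀ hfy', mul_one] at h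

end SchwarzPick

section FixedPoint

variable {f : ℂ → ℂ}

theorem exists_fixedPoint_of_mapsTo_closedBall (hf : DifferentiableOn ℂ f (ball 0 1))
    (hmaps : MapsTo f (ball 0 1) (ball 0 1))
    (hcontr : ∃ z₀ w₀, ‖z₀‖ < 1 ∧ ‖w₀‖ < 1 ∧ pseudoHypDist (f z₀) (f w₀) < pseudoHypDist z₀ w₀)
    {r : ℝ} (hr0 : 0 ≤ r) (hr1 : r < 1) (hr : MapsTo f (closedBall 0 r) (closedBall 0 r)) :
    ∃ p, ‖p‖ < 1 ∧ f p = p := by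
  have hsub : closedBall (0 : ℂ) r ⊆ ball 0 1 := closedBall_subset_ball hr1
  have hcont : ContinuousOn (fun z ↦ pseudoHypDist (f z) z) (closedBall 0 r) := by
    have hfc := hf.continuousOn.mono hsub
    refine ((hfc.sub continuousOn_id).div (continuousOn_const.sub
      (continuous_conj.continuousOn.mul hfc)) fun z hz ↦ ?_).norm
    exact one_sub_conj_mul_ne_zero (mem_ball_zero_iff.1 (hsub hz))
      (mem_ball_zero_iff.1 (hmaps (hsub hz))).le
  obtain ⟨p, hp, hmin⟩ :=
    (isCompact_closedBall (0 : ℂ) r).exists_isMinOn (nonempty_closedBall.2 hr0) hcont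
  have hp1 : ‖p‖ < 1 := mem_ball_zero_iff.1 (hsub hp)
  refine ⟨p, hp1, by_contra fun hne ↦ ?_⟩
  -- `p` minimises `z ↦ ρ(f z, z)` on the invariant ball, but `f p` would do strictly better.
  exact (hmin (hr hp)).not_gt
    (pseudoHypDist_lt_of_ne hf hmaps hcontr (mem_ball_zero_iff.1 (hsub (hr hp))) hp1 hne)

theorem exists_unique_attracting_fixedPoint (hf : DifferentiableOn ℂ f (ball 0 1))
    (hmaps : MapsTo f (ball 0 1) (ball 0 1))
    (hcontr : ∃ z₀ w₀, ‖z₀‖ < 1 ∧ ‖w₀‖ < 1 ∧ pseudoHypDist (f z₀) (f w₀) < pseudoHypDist z₀ w₀)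
    {r : ℝ} (hr0 : 0 ≤ r) (hr1 : r < 1) (hr : MapsTo f (closedBall 0 r) (closedBall 0 r)) :
    ∃ z₀ : ℂ, ‖z₀‖ < 1 ∧ f z₀ = z₀ ∧ ‖deriv f z₀‖ < 1 ∧
      ∀ w : ℂ, ‖w‖ < 1 → f w = w → w = z₀ := by
  obtain ⟨p, hp, hfp⟩ := exists_fixedPoint_of_mapsTo_closedBall hf hmaps hcontr hr0 hr1 hr
  refine ⟨p, hp, hfp, ?_, fun w hw hfw ↦ by_contra fun hne ↦ ?_⟩
  · have h := norm_deriv_mul_lt hf hmaps hcontr hp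
    rw [hfp] at h
    exact (mul_lt_iff_lt_one_left (by nlinarith [norm_nonneg p])).1 h
  · have h := pseudoHypDist_lt_of_ne hf hmaps hcontr hw hp hne
    rw [hfw, hfp] at h
    exact h.false

end FixedPoint

theorem prod_mul_sum_one_sub_le_one_sub_prod {ι : Type*} (s : Finset ι) {x : ι → ℝ}
    (h0 : ∀ i ∈ s, 0 ≤ x i) (h1 : ∀ i ∈ s, x i ≤ 1) :
    (∏ i ∈ s, x i) * ∑ i ∈ s, (1 - x i) ≤ 1 - ∏ i ∈ s, x i := by
  classical
  induction s using Finset.induction_on with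
  | empty => simp
  | insert j s hj ih =>
    have h0' : ∀ i ∈ s, 0 ≤ x i := fun i hi ↦ h0 i (mem_insert_of_mem hi)
    have h1' : ∀ i ∈ s, x i ≤ 1 := fun i hi ↦ h1 i (mem_insert_of_mem hi)
    have hP0 := prod_nonneg h0'
    have hP1 := prod_le_one h0' h1'
    have hxj0 := h0 j (mem_insert_self j s)
    have hxj1 := h1 j (mem_insert_self j s)
    rw [prod_insert hj, sum_insert hj]
    nlinarith [mul_le_mul_of_nonneg_left (ih h0' h1') hxj0,
      mul_nonneg (sub_nonneg.2 hxj1) (sub_nonneg.2 (mul_le_one₀ hxj1 hP0 hP1))]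

section BlaschkeProduct

variable {ι : Type*} [Fintype ι] {C : ℂ} {a : ι → ℂ} {z : ℂ}

noncomputable def blaschkeProduct (C : ℂ) (a : ι → ℂ) (z : ℂ) : ℂ :=
  C * ∏ i, blaschkeFactor (a i) z

theorem norm_blaschkeProduct (hC : ‖C‖ = 1) (z : ℂ) :
    ‖blaschkeProduct C a z‖ = ∏ i, ‖blaschkeFactor (a i) z‖ := by
  rw [blaschkeProduct, norm_mul, hC, one_mul, norm_prod]

theorem norm_blaschkeProduct_le_prod (hC : ‖C‖ = 1) (ha : ∀ i, ‖a i‖ < 1) (hz : ‖z‖ ≤ 1)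
    (s : Finset ι) : ‖blaschkeProduct C a z‖ ≤ ∏ i ∈ s, ‖blaschkeFactor (a i) z‖ := by
  rw [norm_blaschkeProduct hC]
  exact prod_le_prod_of_subset_of_le_one (subset_univ s) (fun i _ ↦ norm_nonneg _)
    fun i _ _ ↦ norm_blaschkeFactor_le_one (ha i) hz

theorem mapsTo_blaschkeProduct [Nonempty ι] (hC : ‖C‖ = 1) (ha : ∀ i, ‖a i‖ < 1) :
    MapsTo (blaschkeProduct C a) (ball 0 1) (ball 0 1) := fun z hz ↦ by
  rw [mem_ball_zero_iff] at hz ⊢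
  obtain ⟨i⟩ := ‹Nonempty ι›
  calc ‖blaschkeProduct C a z‖ ≤ ∏ k ∈ {i}, ‖blaschkeFactor (a k) z‖ :=
        norm_blaschkeProduct_le_prod hC ha hz.le _
    _ < 1 := by simpa using norm_blaschkeFactor_lt_one (ha i) hz

theorem hasDerivAt_blaschkeProduct [DecidableEq ι] (ha : ∀ i, ‖a i‖ < 1) (hz : ‖z‖ ≤ 1) :
    HasDerivAt (blaschkeProduct C a) (C * ∑ i, (∏ j ∈ univ.erase i, blaschkeFactor (a j) z) *
      (((1 - ‖a i‖ ^ 2 : ℝ) : ℂ) / (1 - conj (a i) * z) ^ 2)) z := by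
  have h := (HasDerivAt.fun_finsetProd (u := univ) fun i _ ↦
    hasDerivAt_blaschkeFactor (one_sub_conj_mul_ne_zero (ha i) hz)).const_mul C
  simp only [smul_eq_mul] at h
  exact h

theorem differentiableOn_blaschkeProduct (ha : ∀ i, ‖a i‖ < 1) :
    DifferentiableOn ℂ (blaschkeProduct C a) (closedBall 0 1) := fun _ hz ↦ by
  classical
  exact (hasDerivAt_blaschkeProduct ha (mem_closedBall_zero_iff.1 hz)).differentiableAt
    |>.differentiableWithinAt

theorem norm_deriv_blaschkeProduct_le (hC : ‖C‖ = 1) (ha : ∀ i, ‖a i‖ < 1) (hz : ‖z‖ = 1) :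
    ‖deriv (blaschkeProduct C a) z‖ ≤ ∑ i, (1 - ‖a i‖ ^ 2) / ‖1 - conj (a i) * z‖ ^ 2 := by
  classical
  rw [(hasDerivAt_blaschkeProduct ha hz.le).deriv, norm_mul, hC, one_mul]
  refine (norm_sum_le _ _).trans (sum_le_sum fun i _ ↦ le_of_eq ?_)
  rw [norm_mul, norm_prod, prod_eq_one fun j _ ↦ norm_blaschkeFactor_of_norm_eq_one (ha j) hz,
    one_mul, norm_div, norm_pow,
    Complex.norm_of_nonneg (by nlinarith [norm_nonneg (a i), ha i])]

theorem one_sub_sq_norm_mul_le_one_sub_sq_norm_blaschkeProduct (hC : ‖C‖ = 1)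
    (ha : ∀ i, ‖a i‖ < 1) (hz : ‖z‖ ≤ 1) :
    (1 - ‖z‖ ^ 2) * (‖blaschkeProduct C a z‖ ^ 2 *
      ∑ i, (1 - ‖a i‖ ^ 2) / ‖1 - conj (a i) * z‖ ^ 2) ≤ 1 - ‖blaschkeProduct C a z‖ ^ 2 := by
  have hprod : ‖blaschkeProduct C a z‖ ^ 2 = ∏ i, ‖blaschkeFactor (a i) z‖ ^ 2 := by
    rw [norm_blaschkeProduct hC, Finset.prod_pow]
  have hsum : (1 - ‖z‖ ^ 2) * ∑ i, (1 - ‖a i‖ ^ 2) / ‖1 - conj (a i) * z‖ ^ 2 =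
      ∑ i, (1 - ‖blaschkeFactor (a i) z‖ ^ 2) := by
    rw [mul_sum]
    refine sum_congr rfl fun i _ ↦ ?_
    rw [one_sub_sq_norm_blaschkeFactor (ha i) hz]
    ring
  rw [mul_left_comm, hsum, hprod]
  exact prod_mul_sum_one_sub_le_one_sub_prod _ (fun i _ ↦ by positivity)
    fun i _ ↦ pow_le_one₀ (norm_nonneg _) (norm_blaschkeFactor_le_one (ha i) hz)

theorem exists_pseudoHypDist_blaschkeProduct_lt (hC : ‖C‖ = 1) (ha : ∀ i, ‖a i‖ < 1) {i j : ι}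
    (hij : i ≠ j) :
    ∃ z₀ w₀, ‖z₀‖ < 1 ∧ ‖w₀‖ < 1 ∧
      pseudoHypDist (blaschkeProduct C a z₀) (blaschkeProduct C a w₀) < pseudoHypDist z₀ w₀ := by
  classical
  set z₀ := blaschkeFactor (-a i) (1 / 2)
  have hz₀ : ‖z₀‖ < 1 := mem_ball_zero_iff.1 <|
    mapsTo_blaschkeFactor (by rw [norm_neg]; exact ha i) (by norm_num [mem_ball_zero_iff])
  have hφz₀ : ‖blaschkeFactor (a i) z₀‖ = 1 / 2 := by
    rw [blaschkeFactor_blaschkeFactor_neg (ha i) (by norm_num)]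
    norm_num
  have hzero : blaschkeProduct C a (a i) = 0 := by
    simp [blaschkeProduct, prod_eq_zero (mem_univ i)]
  refine ⟨z₀, a i, hz₀, ha i, ?_⟩
  rw [pseudoHypDist, pseudoHypDist, hzero, blaschkeFactor_zero_left]
  calc ‖blaschkeProduct C a z₀‖ ≤ ∏ k ∈ {i, j}, ‖blaschkeFactor (a k) z₀‖ :=
        norm_blaschkeProduct_le_prod hC ha hz₀.le _
    _ = ‖blaschkeFactor (a i) z₀‖ * ‖blaschkeFactor (a j) z₀‖ := prod_pair hij
    _ < ‖blaschkeFactor (a i) z₀‖ := by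
      rw [hφz₀]
      linarith [norm_blaschkeFactor_lt_one (ha j) hz₀]

theorem exists_mapsTo_closedBall_blaschkeProduct (hC : ‖C‖ = 1) (ha : ∀ i, ‖a i‖ < 1)
    (hexp : ∀ z : ℂ, ‖z‖ = 1 → 1 < ‖deriv (blaschkeProduct C a) z‖) :
    ∃ r, 0 ≤ r ∧ r < 1 ∧ MapsTo (blaschkeProduct C a) (closedBall 0 r) (closedBall 0 r) := by
  set B := blaschkeProduct C a
  set Q : ℂ → ℝ := fun z ↦ ‖B z‖ ^ 2 * ∑ i, (1 - ‖a i‖ ^ 2) / ‖1 - conj (a i) * z‖ ^ 2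
  have hBc := (differentiableOn_blaschkeProduct (C := C) ha).continuousOn
  have hQc : ContinuousOn Q (closedBall 0 1) := by
    refine (hBc.norm.pow 2).mul (continuousOn_finsetSum _ fun i _ ↦ continuousOn_const.div
      (by fun_prop) fun z hz ↦ ?_)
    exact pow_ne_zero 2 (norm_ne_zero_iff.2
      (one_sub_conj_mul_ne_zero (ha i) (mem_closedBall_zero_iff.1 hz)))
  -- On the unit circle `Q ≥ ‖B'‖ > 1`, so `Q ≤ 1` only on a compact subset of the open disk;
  -- outside it, `(1 - ‖w‖²) Q w ≤ 1 - ‖B w‖²` forces `‖B w‖ ≤ ‖w‖`.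
  have hK : closedBall 0 1 ∩ Q ⁻¹' Iic 1 ⊆ ball 0 1 := by
    rintro z ⟨hz, hQz⟩
    rw [mem_closedBall_zero_iff] at hz
    refine mem_ball_zero_iff.2 (hz.lt_of_ne fun hz1 ↦ ?_)
    have hB1 : ‖B z‖ = 1 := by
      rw [norm_blaschkeProduct hC,
        prod_eq_one fun i _ ↦ norm_blaschkeFactor_of_norm_eq_one (ha i) hz1]
    have := (hexp z hz1).trans_le (norm_deriv_blaschkeProduct_le hC ha hz1)
    simp only [Set.mem_preimage, Set.mem_Iic, Q, hB1] at hQz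
    linarith
  obtain ⟨r', hr'1, hr'⟩ :=
    exists_lt_subset_ball (hQc.preimage_isClosed_of_isClosed isClosed_closedBall isClosed_Iic) hK
  set r := max r' (1 / 2)
  have hr0 : 0 < r := lt_max_of_lt_right (by norm_num)
  have hr1 : r < 1 := max_lt hr'1 (by norm_num)
  refine ⟨r, hr0.le, hr1, fun z hz ↦ mem_closedBall_zero_iff.2 ?_⟩
  refine Complex.norm_le_of_forall_mem_frontier_norm_le isBounded_ball
    (DifferentiableOn.diffContOnCl ?_) (fun w hw ↦ ?_) (by rwa [closure_ball _ hr0.ne'])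
  · rw [closure_ball _ hr0.ne']
    exact (differentiableOn_blaschkeProduct ha).mono (closedBall_subset_closedBall hr1.le)
  · rw [frontier_ball _ hr0.ne', mem_sphere_zero_iff_norm] at hw
    have hw1 : ‖w‖ ≤ 1 := hw.trans_le hr1.le
    have hQw : 1 < Q w := by
      by_contra h
      have := mem_ball_zero_iff.1 (hr' ⟨mem_closedBall_zero_iff.2 hw1, not_lt.1 h⟩)
      exact (hw ▸ this).not_ge (le_max_left _ _)
    have h := one_sub_sq_norm_mul_le_one_sub_sq_norm_blaschkeProduct hC ha hw1
    rw [hw] at h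
    nlinarith [norm_nonneg (B w), mul_lt_mul_of_pos_left hQw (by nlinarith : 0 < 1 - r ^ 2)]

end BlaschkeProduct

theorem stmt_9 (n : ℕ) (hn : 2 ≤ n) (a : Fin n → ℂ) (ha : ∀ i, ‖a i‖ < 1)
    (C : ℂ) (hC : ‖C‖ = 1)
    (B : ℂ → ℂ)
    (hB : ∀ w : ℂ, B w = C * ∏ i, (w - a i) / (1 - (starRingEnd ℂ) (a i) * w))
    (hexp : ∀ z : ℂ, ‖z‖ = 1 → 1 < ‖deriv B z‖) :
    ∃ z₀ : ℂ, ‖z₀‖ < 1 ∧ B z₀ = z₀ ∧ ‖deriv B z₀‖ < 1 ∧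
      ∀ w : ℂ, ‖w‖ < 1 → B w = w → w = z₀ := by
  obtain rfl : B = blaschkeProduct C a := funext hB
  have : Nonempty (Fin n) := ⟨⟨0, by omega⟩⟩
  obtain ⟨r, hr0, hr1, hr⟩ := exists_mapsTo_closedBall_blaschkeProduct hC ha hexp
  exact exists_unique_attracting_fixedPoint
    ((differentiableOn_blaschkeProduct ha).mono ball_subset_closedBall)
    (mapsTo_blaschkeProduct hC ha)
    (exists_pseudoHypDist_blaschkeProduct_lt hC ha (i := ⟨0, by omega⟩) (j := ⟨1, by omega⟩)
      (by simp))
    hr0 hr1 hr
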